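/- arXiv:1312.2367 — 5 statements merged into one kernel-verified Lean document; each statement's English description precedes it below -/
import Mathlib

section
/- For the complete 2-dimensional simplicial complex X on n vertices, the 0-th coboundary expansion constant satisfies ε_0(X) ≥ n/(n-1) ≥ 1. -/
variable {V : Type*} [Fintype V] [DecidableEq V]

/-- `‖δ₀ f‖` in the complete complex on `V`: the fraction (among all `C(n,2)` edges, i.e.
2-element subsets of `V`) of edges `{u,v}` with `f(u) + f(v) ≠ 0`. -/
noncomputable def nrmDelta0 (f : V → ZMod 2) : ℝ :=
  (((Finset.univ : Finset (Finset V)).filter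
      (fun s => s.card = 2 ∧ (∑ v ∈ s, f v) ≠ 0)).card : ℝ)
    / ((Fintype.card V).choose 2 : ℝ)

/-- The normalized Hamming distance from `f ∈ C^0` to `B^0 = {0, 𝟙}`. -/
noncomputable def distBar0 (f : V → ZMod 2) : ℝ :=
  sInf {x : ℝ | ∃ h ∈ ({0, fun _ => 1} : Set (V → ZMod 2)),
    x = ((Finset.univ.filter (fun v => f v ≠ h v)).card : ℝ) / (Fintype.card V : ℝ)}

/-- `ε₀` of the complete 2-dimensional complex `K_n^{(2)}` on the vertex set `V`. -/
noncomputable def eps0Complete (V : Type*) [Fintype V] [DecidableEq V] : ℝ :=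
  sInf {x : ℝ | ∃ f : V → ZMod 2, f ≠ 0 ∧ f ≠ (fun _ => 1) ∧
    x = nrmDelta0 f / distBar0 f}

/-! A nonconstant `f` splits the vertices into its support `S` and the complement `Sᶜ`. The edges
on which `δ₀ f` does not vanish are exactly the `|S| |Sᶜ|` edges across this cut, while `f` lies at
distance `min (|S|, |Sᶜ|) / n` from `B⁰`. Since `|S| |Sᶜ| = min * max`, the ratio equals
`2 max (|S|, |Sᶜ|) / (n - 1) ≥ (|S| + |Sᶜ|) / (n - 1) = n / (n - 1)`. -/

open Finset

omit [Fintype V] in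
lemma card_image_pair_product {S T : Finset V} (hST : Disjoint S T) :
    #((S ×ˢ T).image fun x => ({x.1, x.2} : Finset V)) = #S * #T := by
  rw [card_image_of_injOn, card_product]
  rintro ⟨u, v⟩ huv ⟨u', v'⟩ huv' (heq : ({u, v} : Finset V) = {u', v'})
  simp only [coe_product, Set.mem_prod, mem_coe] at huv huv'
  have hu : u ∈ ({u', v'} : Finset V) := heq ▸ mem_insert_self u {v}
  have hv : v ∈ ({u', v'} : Finset V) := heq ▸ mem_insert_of_mem (mem_singleton_self v)
  rw [mem_insert, mem_singleton] at hu hv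
  have hu : u = u' := hu.resolve_right fun h => disjoint_left.mp hST huv.1 (h ▸ huv'.2)
  have hv : v = v' := hv.resolve_left fun h => disjoint_left.mp hST huv'.1 (h ▸ huv.2)
  rw [hu, hv]

lemma zmod_two_ne_one_iff {a : ZMod 2} : a ≠ 1 ↔ a = 0 := by
  revert a; decide

lemma zmod_two_add_ne_zero_iff {a b : ZMod 2} : a + b ≠ 0 ↔ (a ≠ 0 ↔ b = 0) := by
  revert a b; decide

lemma filter_pair_sum_ne_zero_eq_image (f : V → ZMod 2) :
    (univ : Finset (Finset V)).filter (fun s => #s = 2 ∧ ∑ v ∈ s, f v ≠ 0)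
      = (({v | f v ≠ 0} : Finset V) ×ˢ ({v | f v ≠ 0} : Finset V)ᶜ).image
          fun x => ({x.1, x.2} : Finset V) := by
  ext s
  simp only [mem_filter, mem_univ, true_and, mem_image, mem_product, mem_compl, not_not,
    Prod.exists]
  constructor
  · rintro ⟨hs, hsum⟩
    obtain ⟨a, b, hab, rfl⟩ := card_eq_two.mp hs
    rw [sum_pair hab, zmod_two_add_ne_zero_iff] at hsum
    by_cases ha : f a = 0
    · exact ⟨b, a, ⟨fun hb => hsum.mpr hb ha, ha⟩, pair_comm b a⟩
    · exact ⟨a, b, ⟨ha, hsum.mp ha⟩, rfl⟩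
  · rintro ⟨u, v, ⟨hu, hv⟩, rfl⟩
    have huv : u ≠ v := fun h => hu (h ▸ hv)
    rw [card_pair huv, sum_pair huv, hv, add_zero]
    exact ⟨rfl, hu⟩

lemma card_filter_pair_sum_ne_zero (f : V → ZMod 2) :
    #((univ : Finset (Finset V)).filter (fun s => #s = 2 ∧ ∑ v ∈ s, f v ≠ 0))
      = #({v | f v ≠ 0} : Finset V) * #({v | f v ≠ 0} : Finset V)ᶜ := by
  rw [filter_pair_sum_ne_zero_eq_image, card_image_pair_product disjoint_compl_right]

lemma distBar0_eq_min (f : V → ZMod 2) :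
    distBar0 f = min (#({v | f v ≠ 0} : Finset V) : ℝ) #({v | f v ≠ 0} : Finset V)ᶜ
      / Fintype.card V := by
  have hne_one : ({v | f v ≠ 1} : Finset V) = ({v | f v ≠ 0} : Finset V)ᶜ := by
    ext v
    simp only [mem_filter, mem_univ, true_and, mem_compl, not_not, zmod_two_ne_one_iff]
  have hset : {x : ℝ | ∃ h ∈ ({0, fun _ => 1} : Set (V → ZMod 2)),
      x = (#({v | f v ≠ h v} : Finset V) : ℝ) / Fintype.card V}
      = {(#({v | f v ≠ 0} : Finset V) : ℝ) / Fintype.card V,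
          (#({v | f v ≠ 0} : Finset V)ᶜ : ℝ) / Fintype.card V} := by
    ext x
    simp [hne_one]
  rw [distBar0, hset, csInf_pair, min_div_div_right (Nat.cast_nonneg _)]

lemma nrmDelta0_div_distBar0 {f : V → ZMod 2} (hf0 : f ≠ 0) (hf1 : f ≠ fun _ => 1) :
    nrmDelta0 f / distBar0 f
      = 2 * max (#({v | f v ≠ 0} : Finset V) : ℝ) #({v | f v ≠ 0} : Finset V)ᶜ
          / (Fintype.card V - 1) := by
  set S : Finset V := {v | f v ≠ 0} with hS_def
  have hS : (1 : ℝ) ≤ #S := by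
    obtain ⟨v, hv⟩ := Function.ne_iff.mp hf0
    exact_mod_cast card_pos.mpr ⟨v, by simpa [S] using hv⟩
  have hSc : (1 : ℝ) ≤ #Sᶜ := by
    obtain ⟨v, hv⟩ := Function.ne_iff.mp hf1
    exact_mod_cast card_pos.mpr ⟨v, by simpa [S] using zmod_two_ne_one_iff.mp hv⟩
  have hcard : (Fintype.card V : ℝ) = #S + #Sᶜ := by exact_mod_cast (card_add_card_compl S).symm
  rw [nrmDelta0, card_filter_pair_sum_ne_zero, distBar0_eq_min, ← hS_def, Nat.cast_choose_two,
    hcard, Nat.cast_mul, ← min_mul_max (#S : ℝ)]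
  have hmin : (0 : ℝ) < min (#S : ℝ) #Sᶜ := lt_min (by linarith) (by linarith)
  have hn : (0 : ℝ) < #S + #Sᶜ - 1 := by linarith
  field_simp

lemma exists_ne_zero_ne_one (hV : 1 < Fintype.card V) :
    ∃ f : V → ZMod 2, f ≠ 0 ∧ f ≠ fun _ => 1 := by
  obtain ⟨u, v, huv⟩ := Fintype.exists_pair_of_one_lt_card hV
  refine ⟨Pi.single u 1, fun h => ?_, fun h => ?_⟩
  · simpa using congrFun h u
  · simpa [Pi.single_apply, huv.symm] using congrFun h v

/-- For the complete 2-dimensional simplicial complex `X = K_n^{(2)}` on `n`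
vertices (`n ≥ 2`), the `0`-th coboundary expansion constant satisfies
`ε₀(X) ≥ n/(n-1) ≥ 1`. -/
theorem eps0_complete_ge (n : ℕ) (hn : 2 ≤ n) (hV : Fintype.card V = n) :
    eps0Complete V ≥ (n : ℝ) / ((n : ℝ) - 1) ∧ (n : ℝ) / ((n : ℝ) - 1) ≥ 1 := by
  subst hV
  have hn' : (1 : ℝ) < Fintype.card V := by exact_mod_cast hn
  refine ⟨?_, (one_le_div (by linarith)).mpr (by linarith)⟩
  obtain ⟨f₀, hf₀⟩ := exists_ne_zero_ne_one (V := V) hn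
  refine le_csInf ⟨_, f₀, hf₀.1, hf₀.2, rfl⟩ ?_
  rintro _ ⟨f, hf0, hf1, rfl⟩
  rw [nrmDelta0_div_distBar0 hf0 hf1]
  gcongr
  rw [← card_add_card_compl ({v | f v ≠ 0} : Finset V), Nat.cast_add, two_mul]
  exact add_le_add (le_max_left _ _) (le_max_right _ _)
end

section
/- For the complete 2-dimensional simplicial complex X on n vertices and any α ∈ C^1(X,F_2), 3·|δ_1 α| = Σ_{u ∈ [n]} |α - δ_0 α_u| ≥ n · dist(α, B^1), where α_u is the local view of α from u. Consequently ε_1(X) ≥ n/(n-2) ≥ 1. -/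
variable {V : Type*} [Fintype V] [DecidableEq V]

/-- `|δ₁ α|`: the number of triangles (3-element subsets of `V`) on which
`(δ₁ α)({u,v,w}) = α({u,v}) + α({v,w}) + α({u,w})` is nonzero. -/
def wtTri (α : Finset V → ZMod 2) : ℕ :=
  ((Finset.univ : Finset (Finset V)).filter
    (fun s => s.card = 3 ∧ (∑ v ∈ s, α (s.erase v)) ≠ 0)).card

/-- The number of edges (2-element subsets of `V`) on which a `1`-cochain is nonzero. -/
def wtEdge (β : Finset V → ZMod 2) : ℕ :=
  ((Finset.univ : Finset (Finset V)).filter (fun s => s.card = 2 ∧ β s ≠ 0)).card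

/-- The local view of `α` from `u`: `α_u(v) = α({u,v})` for `v ≠ u`, and `α_u(u) = 0`. -/
def localView (α : Finset V → ZMod 2) (u : V) : V → ZMod 2 :=
  fun v => if v = u then 0 else α {u, v}

/-- `dist(α, B¹)`: the minimal Hamming weight (number of edges) of `α - δ₀ g` over all
`g ∈ C⁰`, i.e. the distance from `α` to the coboundaries `B¹ = Im δ₀`. -/
noncomputable def dist1 (α : Finset V → ZMod 2) : ℕ :=
  sInf {k : ℕ | ∃ g : V → ZMod 2, k = wtEdge (fun s => α s - ∑ v ∈ s, g v)}

/-- `ε₁` of the complete 2-dimensional complex on `V`. -/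
noncomputable def eps1Complete (V : Type*) [Fintype V] [DecidableEq V] : ℝ :=
  sInf {x : ℝ | ∃ α : Finset V → ZMod 2,
    ¬ (∃ g : V → ZMod 2, ∀ s : Finset V, s.card = 2 → α s = ∑ v ∈ s, g v) ∧
    x = ((wtTri α : ℝ) / ((Fintype.card V).choose 3 : ℝ))
        / ((dist1 α : ℝ) / ((Fintype.card V).choose 2 : ℝ))}

/-! Removing `u` from a triangle `{u, x, y}` turns `(δ₁ α)({u, x, y})` into
`(α - δ₀ α_u)({x, y})`, and `α - δ₀ α_u` vanishes on the edges through `u`. So the support of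
`α - δ₀ α_u` is in bijection with the support triangles of `δ₁ α` through `u`, and summing over
`u` counts every such triangle three times. Each `α - δ₀ α_u` lies in `α + B¹`, hence has weight at
least `dist(α, B¹)`; together with `3 · C(n, 3) = (n - 2) · C(n, 2)` this gives `ε₁ ≥ n / (n - 2)`.
The constant cochain `1` has `δ₁ 1 = 1` on every triangle, so it is not a coboundary and the
infimum defining `ε₁` is taken over a nonempty set. -/

open Finset

theorem Finset.sum_card_filter_mem {α : Type*} [Fintype α] [DecidableEq α]
    (B : Finset (Finset α)) : ∑ a, #{t ∈ B | a ∈ t} = ∑ t ∈ B, #t := by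
  simp_rw [card_eq_sum_ones, sum_filter]
  rw [sum_comm]
  simp

section

variable {V : Type*} [DecidableEq V]

def IsCoboundary (α : Finset V → ZMod 2) : Prop :=
  ∃ g : V → ZMod 2, ∀ s : Finset V, #s = 2 → α s = ∑ v ∈ s, g v

theorem sum_erase_eq_zero_of_isCoboundary {α : Finset V → ZMod 2} (hα : IsCoboundary α)
    {t : Finset V} (ht : #t = 3) : ∑ v ∈ t, α (t.erase v) = 0 := by
  obtain ⟨g, hg⟩ := hα
  calc ∑ v ∈ t, α (t.erase v) = ∑ v ∈ t, (∑ w ∈ t, g w - g v) :=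
        sum_congr rfl fun v hv => by
          rw [hg _ (by rw [card_erase_of_mem hv, ht]), sum_erase_eq_sub hv]
    _ = (∑ w ∈ t, g w) + (∑ w ∈ t, g w) := by
        rw [sum_sub_distrib, sum_const, ht, succ_nsmul, add_sub_cancel_right, two_nsmul]
    _ = 0 := CharTwo.add_self_eq_zero _

theorem not_isCoboundary_one {t : Finset V} (ht : #t = 3) :
    ¬ IsCoboundary (fun _ : Finset V => (1 : ZMod 2)) := fun h => by
  have := sum_erase_eq_zero_of_isCoboundary h ht
  rw [sum_const, ht] at this
  exact absurd this (by decide)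

lemma localView_self (α : Finset V → ZMod 2) (u : V) : localView α u u = 0 := by
  simp [localView]

lemma localView_of_ne (α : Finset V → ZMod 2) {u v : V} (h : v ≠ u) :
    localView α u v = α {u, v} := by
  simp [localView, h]

lemma sub_localView_eq_zero_of_mem (α : Finset V → ZMod 2) {u : V} {s : Finset V}
    (hs : #s = 2) (hu : u ∈ s) : α s - ∑ v ∈ s, localView α u v = 0 := by
  obtain ⟨x, y, hxy, rfl⟩ := card_eq_two.mp hs
  rw [sum_pair hxy]
  rcases mem_insert.mp hu with rfl | hu
  · simp [localView_self, localView_of_ne α hxy.symm]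
  · obtain rfl := mem_singleton.mp hu
    simp [localView_self, localView_of_ne α hxy, pair_comm]

lemma sum_erase_insert_eq_sub_localView (α : Finset V → ZMod 2) {u : V} {s : Finset V}
    (hu : u ∉ s) (hs : #s = 2) :
    ∑ v ∈ insert u s, α ((insert u s).erase v) = α s - ∑ v ∈ s, localView α u v := by
  obtain ⟨x, y, hxy, rfl⟩ := card_eq_two.mp hs
  have hux : x ≠ u := by grind
  have huy : y ≠ u := by grind
  have hx : (insert u {x, y} : Finset V).erase x = {u, y} := by grind
  have hy : (insert u {x, y} : Finset V).erase y = {u, x} := by grind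
  rw [sum_insert hu, erase_insert hu, sum_pair hxy, sum_pair hxy, hx, hy,
    localView_of_ne α hux, localView_of_ne α huy, CharTwo.sub_eq_add]
  ring

end

section

variable {V : Type*} [Fintype V]

lemma wtEdge_eq_zero_iff {β : Finset V → ZMod 2} : wtEdge β = 0 ↔ ∀ s, #s = 2 → β s = 0 := by
  simp [wtEdge, filter_eq_empty_iff]

lemma dist1_le_wtEdge (α : Finset V → ZMod 2) (g : V → ZMod 2) :
    dist1 α ≤ wtEdge (fun s => α s - ∑ v ∈ s, g v) :=
  Nat.sInf_le ⟨g, rfl⟩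

theorem dist1_pos {α : Finset V → ZMod 2} (hα : ¬ IsCoboundary α) : 0 < dist1 α := by
  obtain ⟨g, hg⟩ : dist1 α ∈ {k | ∃ g : V → ZMod 2, k = wtEdge (fun s => α s - ∑ v ∈ s, g v)} :=
    Nat.sInf_mem ⟨_, 0, rfl⟩
  refine Nat.pos_of_ne_zero fun h0 => hα ⟨g, fun s hs => ?_⟩
  exact sub_eq_zero.mp (wtEdge_eq_zero_iff.mp (hg ▸ h0) s hs)

end

def supportTri (α : Finset V → ZMod 2) : Finset (Finset V) :=
  {t | #t = 3 ∧ ∑ v ∈ t, α (t.erase v) ≠ 0}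

theorem wtEdge_sub_localView (α : Finset V → ZMod 2) (u : V) :
    wtEdge (fun s => α s - ∑ v ∈ s, localView α u v) = #{t ∈ supportTri α | u ∈ t} := by
  have notMem_of_ne {s : Finset V} (hs : #s = 2) (hne : α s - ∑ v ∈ s, localView α u v ≠ 0) :
      u ∉ s := fun h => hne (sub_localView_eq_zero_of_mem α hs h)
  unfold wtEdge supportTri
  refine card_nbij' (insert u) (·.erase u) ?_ ?_ ?_ ?_
  · intro s hs
    simp only [coe_filter, mem_filter, mem_univ, true_and, Set.mem_ofPred_eq] at hs ⊢
    have hu := notMem_of_ne hs.1 hs.2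
    rw [card_insert_of_notMem hu, hs.1, sum_erase_insert_eq_sub_localView α hu hs.1]
    exact ⟨⟨rfl, hs.2⟩, mem_insert_self u s⟩
  · intro t ht
    simp only [coe_filter, mem_filter, mem_univ, true_and, Set.mem_ofPred_eq] at ht ⊢
    obtain ⟨⟨h3, hne⟩, hu⟩ := ht
    have h2 : #(t.erase u) = 2 := by rw [card_erase_of_mem hu, h3]
    rw [← sum_erase_insert_eq_sub_localView α (notMem_erase u t) h2, insert_erase hu]
    exact ⟨h2, hne⟩
  · intro s hs
    simp only [coe_filter, mem_univ, true_and, Set.mem_ofPred_eq] at hs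
    exact erase_insert (notMem_of_ne hs.1 hs.2)
  · intro t ht
    exact insert_erase (mem_filter.mp ht).2

theorem three_mul_wtTri_eq_sum_wtEdge (α : Finset V → ZMod 2) :
    3 * wtTri α = ∑ u : V, wtEdge (fun s => α s - ∑ v ∈ s, localView α u v) := by
  simp_rw [wtEdge_sub_localView, sum_card_filter_mem]
  rw [sum_const_nat fun t ht => (mem_filter.mp ht).2.1, mul_comm]
  rfl

theorem card_mul_dist1_le_sum_wtEdge (α : Finset V → ZMod 2) :
    Fintype.card V * dist1 α ≤ ∑ u : V, wtEdge (fun s => α s - ∑ v ∈ s, localView α u v) := by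
  rw [← card_univ, ← smul_eq_mul, ← sum_const]
  exact sum_le_sum fun u _ => dist1_le_wtEdge α (localView α u)

theorem card_mul_dist1_le_three_mul_wtTri (α : Finset V → ZMod 2) :
    Fintype.card V * dist1 α ≤ 3 * wtTri α :=
  three_mul_wtTri_eq_sum_wtEdge α ▸ card_mul_dist1_le_sum_wtEdge α

lemma cast_sub_two_pos {n : ℕ} (hn : 3 ≤ n) : (0 : ℝ) < n - 2 := by
  have : (3 : ℝ) ≤ n := by exact_mod_cast hn
  linarith

theorem div_sub_two_le_expansion (hn : 3 ≤ Fintype.card V) {α : Finset V → ZMod 2}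
    (hα : ¬ IsCoboundary α) :
    (Fintype.card V : ℝ) / (Fintype.card V - 2) ≤
      ((wtTri α : ℝ) / ((Fintype.card V).choose 3 : ℝ)) /
        ((dist1 α : ℝ) / ((Fintype.card V).choose 2 : ℝ)) := by
  set n := Fintype.card V
  have hD : (0 : ℝ) < dist1 α := by exact_mod_cast dist1_pos hα
  have hn2 := cast_sub_two_pos hn
  have hC3 : (0 : ℝ) < n.choose 3 := by exact_mod_cast Nat.choose_pos hn
  have hchoose : (n.choose 3 : ℝ) * 3 = n.choose 2 * (n - 2) := by
    have h := congrArg (Nat.cast (R := ℝ)) (Nat.choose_succ_right_eq n 2)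
    push_cast [Nat.cast_sub (by omega : 2 ≤ n)] at h
    exact h
  have hcount : (n : ℝ) * dist1 α ≤ 3 * wtTri α := by
    exact_mod_cast card_mul_dist1_le_three_mul_wtTri α
  calc (n : ℝ) / (n - 2) = n * dist1 α / ((n - 2) * dist1 α) :=
        (mul_div_mul_right _ _ hD.ne').symm
    _ ≤ 3 * wtTri α / ((n - 2) * dist1 α) := by gcongr
    _ = ((wtTri α : ℝ) / n.choose 3) / ((dist1 α : ℝ) / n.choose 2) := by
        field_simp
        linear_combination (wtTri α : ℝ) * hchoose

theorem le_eps1Complete (hn : 3 ≤ Fintype.card V) :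
    (Fintype.card V : ℝ) / (Fintype.card V - 2) ≤ eps1Complete V := by
  obtain ⟨t, -, ht⟩ := exists_subset_card_eq (s := (univ : Finset V)) (n := 3) (by rwa [card_univ])
  refine le_csInf ⟨_, _, not_isCoboundary_one ht, rfl⟩ ?_
  rintro x ⟨α, hα, rfl⟩
  exact div_sub_two_le_expansion hn hα

/-- For the complete 2-dimensional complex `X` on `n ≥ 3` vertices and any
`α ∈ C¹(X,F₂)`: `3·|δ₁ α| = ∑_{u ∈ [n]} |α - δ₀ α_u| ≥ n · dist(α, B¹)`, where `α_u` is the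
local view of `α` from `u`.  Consequently `ε₁(X) ≥ n/(n-2) ≥ 1`. -/
theorem complete_complex_eps1 (n : ℕ) (hn : 3 ≤ n) (hV : Fintype.card V = n)
    (α : Finset V → ZMod 2) :
    3 * wtTri α = ∑ u : V, wtEdge (fun s => α s - ∑ v ∈ s, localView α u v) ∧
    (∑ u : V, wtEdge (fun s => α s - ∑ v ∈ s, localView α u v)) ≥ n * dist1 α ∧
    eps1Complete V ≥ (n : ℝ) / ((n : ℝ) - 2) ∧ (n : ℝ) / ((n : ℝ) - 2) ≥ 1 := by
  subst hV
  refine ⟨three_mul_wtTri_eq_sum_wtEdge α, card_mul_dist1_le_sum_wtEdge α, le_eps1Complete hn, ?_⟩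
  rw [ge_iff_le, one_le_div (cast_sub_two_pos hn)]
  linarith
end

section
/- Triangle test soundness for K_n: for any function f on the edges of K_n, the fraction of triangles {i,j,k} with f({i,j})+f({j,k})+f({k,i}) ≠ 0 is at least the normalized Hamming distance from f to the space of sum functions (normalized by C(n,2)). -/
/-!
Fix a vertex `u` and take the potential `g v = f {u, v}` (with `g u = 0`). The sum function of
`g` agrees with `f` on every edge through `u`, and it disagrees with `f` on an edge `{a, b}`
avoiding `u` exactly when the triangle `{u, a, b}` is violated. Hence `distToSum f` is at most the
number of violated triangles through `u`; averaging over `u` gives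
`n · distToSum f ≤ 3 · violatedTriangles f`, and `3 · C(n, 3) = n · C(n - 1, 2) ≤ n · C(n, 2)`.
-/

variable {V : Type*} [Fintype V] [DecidableEq V]

/-- The number of violated triangles: 3-element subsets `{i,j,k}` of `V` with
`(δ₁ f)({i,j,k}) = f({i,j}) + f({j,k}) + f({k,i}) ≠ 0`. -/
def violatedTriangles (f : Finset V → ZMod 2) : ℕ :=
  ((Finset.univ : Finset (Finset V)).filter
    (fun s => s.card = 3 ∧ (∑ v ∈ s, f (s.erase v)) ≠ 0)).card

/-- The Hamming distance from `f` to the space `B¹` of sum functions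
(`h({i,j}) = g(i)+g(j)` for some `g`), counted on the `C(n,2)` edges of `K_n`. -/
noncomputable def distToSum (f : Finset V → ZMod 2) : ℕ :=
  sInf {k : ℕ | ∃ g : V → ZMod 2,
    k = ((Finset.univ : Finset (Finset V)).filter
          (fun s => s.card = 2 ∧ f s ≠ ∑ v ∈ s, g v)).card}

open Finset

theorem Finset.sum_card_filter_mem_eq_mul_card {α : Type*} [Fintype α] [DecidableEq α]
    {𝒜 : Finset (Finset α)} {r : ℕ} (h𝒜 : ∀ s ∈ 𝒜, #s = r) :
    ∑ a, #{s ∈ 𝒜 | a ∈ s} = r * #𝒜 := by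
  simp_rw [card_filter]
  rw [sum_comm, sum_congr rfl fun s hs => by rw [sum_boole, filter_mem_eq_inter, univ_inter,
    Nat.cast_id, h𝒜 s hs], sum_const, smul_eq_mul, mul_comm]

def violatedTriangleSet (f : Finset V → ZMod 2) : Finset (Finset V) :=
  {s | #s = 3 ∧ ∑ v ∈ s, f (s.erase v) ≠ 0}

def sumDisagreementSet (f : Finset V → ZMod 2) (g : V → ZMod 2) : Finset (Finset V) :=
  {s | #s = 2 ∧ f s ≠ ∑ v ∈ s, g v}

omit [DecidableEq V] in
theorem distToSum_le_card_sumDisagreementSet (f : Finset V → ZMod 2) (g : V → ZMod 2) :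
    distToSum f ≤ #(sumDisagreementSet f g) :=
  Nat.sInf_le ⟨g, rfl⟩

omit [Fintype V] in
def starPotential (f : Finset V → ZMod 2) (u : V) : V → ZMod 2 :=
  fun v => if v = u then 0 else f {u, v}

theorem notMem_of_mem_sumDisagreementSet_starPotential {f : Finset V → ZMod 2} {u : V}
    {s : Finset V} (hs : s ∈ sumDisagreementSet f (starPotential f u)) : u ∉ s := by
  intro hu
  simp only [sumDisagreementSet, mem_filter, mem_univ, true_and] at hs
  obtain ⟨hcard, hne⟩ := hs
  obtain ⟨a, b, hab, rfl⟩ := card_eq_two.mp hcard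
  rcases mem_insert.mp hu with rfl | hb
  · simp [sum_pair hab, starPotential, hab.symm] at hne
  · obtain rfl := mem_singleton.mp hb
    simp [sum_pair hab, starPotential, hab, pair_comm] at hne

theorem insert_mem_violatedTriangleSet {f : Finset V → ZMod 2} {u : V} {s : Finset V}
    (hs : s ∈ sumDisagreementSet f (starPotential f u)) :
    insert u s ∈ violatedTriangleSet f := by
  have hu := notMem_of_mem_sumDisagreementSet_starPotential hs
  simp only [sumDisagreementSet, violatedTriangleSet, mem_filter, mem_univ, true_and] at hs ⊢
  obtain ⟨hcard, hne⟩ := hs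
  refine ⟨by rw [card_insert_of_notMem hu, hcard], ?_⟩
  obtain ⟨a, b, hab, rfl⟩ := card_eq_two.mp hcard
  have hua : u ≠ a := by rintro rfl; simp at hu
  have hub : u ≠ b := by rintro rfl; simp at hu
  have hpot : ∀ c, u ≠ c → starPotential f u c = f {u, c} := fun c hc => if_neg hc.symm
  rw [sum_pair hab, hpot a hua, hpot b hub] at hne
  have htriangle : ∑ v ∈ ({u, a, b} : Finset V), f (({u, a, b} : Finset V).erase v)
      = f {a, b} + f {u, b} + f {u, a} := by
    simp [sum_insert, hu, hab, hua, hub, erase_insert_of_ne, add_assoc]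
  rwa [htriangle, add_assoc, Ne, CharTwo.add_eq_zero, add_comm (f {u, b})]

theorem distToSum_le_card_filter_mem_violatedTriangleSet (f : Finset V → ZMod 2) (u : V) :
    distToSum f ≤ #{s ∈ violatedTriangleSet f | u ∈ s} := by
  refine (distToSum_le_card_sumDisagreementSet f (starPotential f u)).trans <|
    card_le_card_of_injOn (insert u) (fun s hs => ?_) ?_
  · exact mem_filter.mpr ⟨insert_mem_violatedTriangleSet hs, mem_insert_self u s⟩
  · intro s hs t ht hst
    rw [← erase_insert (notMem_of_mem_sumDisagreementSet_starPotential hs),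
      ← erase_insert (notMem_of_mem_sumDisagreementSet_starPotential ht), hst]

theorem card_mul_distToSum_le (f : Finset V → ZMod 2) :
    Fintype.card V * distToSum f ≤ 3 * violatedTriangles f := by
  calc Fintype.card V * distToSum f = ∑ _u : V, distToSum f := by simp
    _ ≤ ∑ u : V, #{s ∈ violatedTriangleSet f | u ∈ s} :=
      sum_le_sum fun u _ => distToSum_le_card_filter_mem_violatedTriangleSet f u
    _ = 3 * violatedTriangles f :=
      sum_card_filter_mem_eq_mul_card fun s hs => (mem_filter.mp hs).2.1

theorem distToSum_mul_choose_three_le (f : Finset V → ZMod 2) :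
    distToSum f * (Fintype.card V).choose 3 ≤ violatedTriangles f * (Fintype.card V).choose 2 := by
  have key := card_mul_distToSum_le f
  generalize Fintype.card V = n at key ⊢
  rcases n with _ | m
  · simp
  refine Nat.le_of_mul_le_mul_left ?_ m.succ_pos
  have hchoose : (m + 1) * m.choose 2 = (m + 1).choose 3 * 3 := Nat.add_one_mul_choose_eq m 2
  calc (m + 1) * (distToSum f * (m + 1).choose 3)
      = ((m + 1) * distToSum f) * (m + 1).choose 3 := by ring
    _ ≤ (3 * violatedTriangles f) * (m + 1).choose 3 := Nat.mul_le_mul_right _ key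
    _ = violatedTriangles f * ((m + 1) * m.choose 2) := by rw [hchoose]; ring
    _ ≤ violatedTriangles f * ((m + 1) * (m + 1).choose 2) := by gcongr; exact m.le_succ
    _ = (m + 1) * (violatedTriangles f * (m + 1).choose 2) := by ring

/-- **triangle test soundness for `K_n`.** For any function `f` on the edges
of `K_n` (`n ≥ 3`), the fraction of triangles `{i,j,k}` with
`f({i,j}) + f({j,k}) + f({k,i}) ≠ 0` (among all `C(n,3)` triangles) is at least the
normalized Hamming distance (over `C(n,2)` edges) from `f` to the space of sum
functions. -/
theorem triangle_test_soundness (hn : 3 ≤ Fintype.card V) (f : Finset V → ZMod 2) :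
    (violatedTriangles f : ℝ) / ((Fintype.card V).choose 3 : ℝ)
      ≥ (distToSum f : ℝ) / ((Fintype.card V).choose 2 : ℝ) := by
  have h2 : (0 : ℝ) < (Fintype.card V).choose 2 := by
    exact_mod_cast Nat.choose_pos (by omega)
  have h3 : (0 : ℝ) < (Fintype.card V).choose 3 := by
    exact_mod_cast Nat.choose_pos hn
  rw [ge_iff_le, div_le_div_iff₀ h2 h3]
  exact_mod_cast distToSum_mul_choose_three_le f
end

section
/- Tensor power testability: for any n×n symmetric {±1}-matrix M with unit diagonal, the fraction of triples {i,j,k} of distinct indices with M_{ij}M_{jk}M_{ki} ≠ 1 is at least the minimum over vectors α ∈ {±1}^n of the fraction of pairs {i,j}, i≠j, with M_{ij} ≠ α_i α_j. -/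
/-!
Take as candidate sign vector the `v`-th column `α = M · v` of `M`. If the pair `{i, j}` is
bad for it, i.e. `M i j ≠ M i v * M j v`, then `v ∉ {i, j}` (by symmetry and the unit diagonal)
and `{i, j, v}` is a bad triple. A bad triple arises in this way from at most three columns, one
for each of its vertices, so summing over `v` gives `∑ v, badPairs (M · v) ≤ 3 * badTriples`,
and the best column satisfies `n * badPairs ≤ 3 * badTriples`. Since
`3 * C(n,3) = (n - 2) * C(n,2) ≤ n * C(n,2)`, this is the claimed inequality of fractions.
-/

open Finset

/-- The number of unordered triples `{i,j,k}` of distinct indices on which the symmetric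
matrix `M` violates the product test `M i j * M j k * M k i = 1`. -/
def badTriples (n : ℕ) (M : Fin n → Fin n → ℤ) : ℕ :=
  ((univ : Finset (Fin n)).powersetCard 3 |>.filter
    (fun s => ∃ i ∈ s, ∃ j ∈ s, ∃ k ∈ s,
      i ≠ j ∧ j ≠ k ∧ i ≠ k ∧ M i j * M j k * M k i ≠ 1)).card

/-- The number of unordered pairs `{i,j}`, `i ≠ j`, on which `M` differs from the rank-one
sign matrix `(α i * α j)`. -/
def badPairs (n : ℕ) (M : Fin n → Fin n → ℤ) (α : Fin n → ℤ) : ℕ :=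
  ((univ : Finset (Fin n)).powersetCard 2 |>.filter
    (fun e => ∃ i ∈ e, ∃ j ∈ e, i ≠ j ∧ M i j ≠ α i * α j)).card

lemma eq_mul_of_mul_mul_eq_one {R : Type*} [CommMonoid R] {a b c : R} (hb : b * b = 1)
    (hc : c * c = 1) (h : a * b * c = 1) : a = b * c :=
  calc a = a * (b * b) * (c * c) := by rw [hb, hc, mul_one, mul_one]
    _ = a * b * c * (b * c) := by ac_rfl
    _ = b * c := by rw [h, one_mul]

lemma Finset.sum_card_filter_mem_eq {α : Type*} [Fintype α] [DecidableEq α]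
    {T : Finset (Finset α)} {k : ℕ} (hT : ∀ t ∈ T, #t = k) : ∑ a, #{t ∈ T | a ∈ t} = k * #T := by
  have := sum_card_bipartiteAbove_eq_sum_card_bipartiteBelow (s := univ) (t := T) (· ∈ ·)
  simp only [bipartiteAbove, bipartiteBelow, filter_mem_eq_inter, univ_inter] at this
  rw [this, sum_congr rfl hT, sum_const, smul_eq_mul, mul_comm]

section BadSets

variable {n : ℕ} (M : Fin n → Fin n → ℤ)

def badPairSet (α : Fin n → ℤ) : Finset (Finset (Fin n)) :=
  (univ.powersetCard 2).filter (fun e => ∃ i ∈ e, ∃ j ∈ e, i ≠ j ∧ M i j ≠ α i * α j)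

def badTripleSet : Finset (Finset (Fin n)) :=
  (univ.powersetCard 3).filter (fun s => ∃ i ∈ s, ∃ j ∈ s, ∃ k ∈ s,
    i ≠ j ∧ j ≠ k ∧ i ≠ k ∧ M i j * M j k * M k i ≠ 1)

lemma card_badPairSet (α : Fin n → ℤ) : #(badPairSet M α) = badPairs n M α := rfl

lemma card_badTripleSet : #(badTripleSet M) = badTriples n M := rfl

variable {M}

lemma notMem_of_mem_badPairSet_column (hsymm : ∀ i j, M i j = M j i) (hdiag : ∀ i, M i i = 1)
    {v : Fin n} {e : Finset (Fin n)} (he : e ∈ badPairSet M (M · v)) : v ∉ e := by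
  obtain ⟨he2, i, hi, j, hj, hij, hbad⟩ := by simpa [badPairSet] using he
  have hpair : {i, j} = e :=
    eq_of_subset_of_card_le (insert_subset_iff.2 ⟨hi, singleton_subset_iff.2 hj⟩)
      (by rw [he2, card_pair hij])
  rw [← hpair, mem_insert, mem_singleton]
  rintro (rfl | rfl)
  · exact hbad (by rw [hdiag, one_mul, hsymm])
  · exact hbad (by rw [hdiag, mul_one])

lemma insert_mem_badTripleSet_of_mem_badPairSet_column (hsymm : ∀ i j, M i j = M j i)
    (hdiag : ∀ i, M i i = 1) (hpm : ∀ i j, M i j = 1 ∨ M i j = -1) {v : Fin n}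
    {e : Finset (Fin n)} (he : e ∈ badPairSet M (M · v)) : insert v e ∈ badTripleSet M := by
  have hv := notMem_of_mem_badPairSet_column hsymm hdiag he
  obtain ⟨he2, i, hi, j, hj, hij, hbad⟩ := by simpa [badPairSet] using he
  have hunit : ∀ i j, M i j * M i j = 1 := fun i j =>
    Int.isUnit_mul_self (Int.isUnit_iff.2 (hpm i j))
  refine mem_filter.2
    ⟨mem_powersetCard.2 ⟨subset_univ _, by rw [card_insert_of_notMem hv, he2]⟩,
    i, mem_insert_of_mem hi, j, mem_insert_of_mem hj, v, mem_insert_self v e,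
    hij, fun h => hv (h ▸ hj), fun h => hv (h ▸ hi), fun h => hbad ?_⟩
  rw [eq_mul_of_mul_mul_eq_one (hunit j v) (hunit v i) h, hsymm v i, mul_comm]

lemma card_badPairSet_column_le (hsymm : ∀ i j, M i j = M j i) (hdiag : ∀ i, M i i = 1)
    (hpm : ∀ i j, M i j = 1 ∨ M i j = -1) (v : Fin n) :
    #(badPairSet M (M · v)) ≤ #{t ∈ badTripleSet M | v ∈ t} := by
  refine card_le_card_of_injOn (insert v) (fun e he => mem_filter.2
    ⟨insert_mem_badTripleSet_of_mem_badPairSet_column hsymm hdiag hpm he, mem_insert_self v e⟩) ?_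
  intro e he f hf hef
  rw [← erase_insert (notMem_of_mem_badPairSet_column hsymm hdiag he),
    ← erase_insert (notMem_of_mem_badPairSet_column hsymm hdiag hf)]
  exact congrArg (·.erase v) hef

lemma sum_badPairs_column_le (hsymm : ∀ i j, M i j = M j i) (hdiag : ∀ i, M i i = 1)
    (hpm : ∀ i j, M i j = 1 ∨ M i j = -1) :
    ∑ v, badPairs n M (M · v) ≤ 3 * badTriples n M := by
  simp_rw [← card_badPairSet, ← card_badTripleSet]
  rw [← sum_card_filter_mem_eq (T := badTripleSet M)
    (fun t ht => (mem_powersetCard.1 (mem_filter.1 ht).1).2)]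
  exact sum_le_sum fun v _ => card_badPairSet_column_le hsymm hdiag hpm v

lemma exists_column_mul_badPairs_le (hn : 0 < n) (hsymm : ∀ i j, M i j = M j i)
    (hdiag : ∀ i, M i i = 1) (hpm : ∀ i j, M i j = 1 ∨ M i j = -1) :
    ∃ v, n * badPairs n M (M · v) ≤ 3 * badTriples n M := by
  obtain ⟨v, -, hmin⟩ := exists_min_image univ (fun v => badPairs n M (M · v))
    ⟨⟨0, hn⟩, mem_univ _⟩
  refine ⟨v, le_trans ?_ (sum_badPairs_column_le hsymm hdiag hpm)⟩
  simpa using card_nsmul_le_sum univ _ _ hmin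

end BadSets

lemma div_choose_two_le_div_choose_three {n : ℕ} (hn : 3 ≤ n) {b t : ℝ} (hb : 0 ≤ b)
    (h : n * b ≤ 3 * t) : b / n.choose 2 ≤ t / n.choose 3 := by
  have hC2 : (0 : ℝ) < n.choose 2 := by exact_mod_cast Nat.choose_pos (by omega)
  have hC3 : (0 : ℝ) < n.choose 3 := by exact_mod_cast Nat.choose_pos hn
  have hid : (n.choose 3 : ℝ) * 3 = n.choose 2 * ((n - 2 : ℕ) : ℝ) := by
    exact_mod_cast Nat.choose_succ_right_eq n 2
  rw [Nat.cast_sub (by omega), Nat.cast_two] at hid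
  rw [div_le_div_iff₀ hC2 hC3]
  nlinarith

/-- **tensor power testability.** For any `n×n` (`n ≥ 3`) symmetric
`{±1}`-matrix `M` with unit diagonal, the fraction (among the `C(n,3)` unordered triples) of
triples `{i,j,k}` of distinct indices with `M i j * M j k * M k i ≠ 1` is at least the
minimum over vectors `α ∈ {±1}ⁿ` of the fraction (among the `C(n,2)` unordered pairs) of
pairs `{i,j}`, `i ≠ j`, with `M i j ≠ α i * α j`. -/
theorem tensor_power_testability (n : ℕ) (hn : 3 ≤ n) (M : Fin n → Fin n → ℤ)
    (hsymm : ∀ i j, M i j = M j i)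
    (hdiag : ∀ i, M i i = 1)
    (hpm : ∀ i j, M i j = 1 ∨ M i j = -1) :
    (badTriples n M : ℝ) / (n.choose 3 : ℝ)
      ≥ sInf {x : ℝ | ∃ α : Fin n → ℤ, (∀ i, α i = 1 ∨ α i = -1) ∧
          x = (badPairs n M α : ℝ) / (n.choose 2 : ℝ)} := by
  obtain ⟨v, hv⟩ := exists_column_mul_badPairs_le (by omega) hsymm hdiag hpm
  have hbound : BddBelow {x : ℝ | ∃ α : Fin n → ℤ, (∀ i, α i = 1 ∨ α i = -1) ∧
      x = (badPairs n M α : ℝ) / (n.choose 2 : ℝ)} :=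
    ⟨0, by rintro x ⟨α, -, rfl⟩; positivity⟩
  calc sInf _ ≤ (badPairs n M (M · v) : ℝ) / (n.choose 2 : ℝ) :=
        csInf_le hbound ⟨(M · v), fun i => hpm i v, rfl⟩
    _ ≤ (badTriples n M : ℝ) / (n.choose 3 : ℝ) :=
        div_choose_two_le_div_choose_three hn (Nat.cast_nonneg _) (by exact_mod_cast hv)
end

section
/- Seidel equivalence testability: for graphs Γ, Γ' on [n] with edge cochains α, α', the fraction of triangles {i,j,k} on which δ_1(α) and δ_1(α') disagree is at least the normalized distance (over C(n,2) edges) of α - α' from B^1(K_n,F_2); in particular, if Γ and Γ' are Seidel equivalent then δ_1 α = δ_1 α', and conversely. -/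
variable {V : Type*} [Fintype V] [DecidableEq V]

/-- `δ₁ β` of a triangle `{i,j,k}`: `β({i,j}) + β({j,k}) + β({i,k})`. -/
def d1 (β : Finset V → ZMod 2) (s : Finset V) : ZMod 2 :=
  ∑ v ∈ s, β (s.erase v)

/-!
With `β = α - α'` one has `δ₁ α - δ₁ α' = δ₁ β`. Fix a vertex `v` and let `g u = β {v, u}`
(`g v = 0`). Then `β e = g x + g y` on every edge `e = {x, y}` through `v`, while on an edge
missing `v` the discrepancy `β {x, y} - (g x + g y)` is exactly `δ₁ β {v, x, y}`. So `β` lies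
within `#{triangles through v where δ₁ β ≠ 0}` of `B¹`; some `v` lies on at most `3/n` of
all such triangles, and `3 C(n,3) ≤ n C(n,2)` turns this into the claimed inequality.
If `δ₁ β = 0`, the same `g` is an exact witness of Seidel equivalence.
-/

open Finset

section Cochains

variable {W : Type*} [DecidableEq W] (β : Finset W → ZMod 2)

lemma d1_sub (α α' : Finset W → ZMod 2) (s : Finset W) :
    d1 (α - α') s = d1 α s - d1 α' s :=
  sum_sub_distrib _ _

lemma d1_insert {v : W} {s : Finset W} (hv : v ∉ s) :
    d1 β (insert v s) = β s + ∑ u ∈ s, β (insert v (s.erase u)) := by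
  rw [d1, sum_insert hv, erase_insert hv]
  congr 1
  refine sum_congr rfl fun u hu => ?_
  rw [erase_insert_of_ne (ne_of_mem_of_not_mem hu hv).symm]

lemma d1_eq_zero_of_forall_eq_sum {g : W → ZMod 2}
    (hg : ∀ e : Finset W, e.card = 2 → β e = ∑ u ∈ e, g u) {s : Finset W} (hs : s.card = 3) :
    d1 β s = 0 :=
  calc d1 β s = ∑ v ∈ s, (∑ u ∈ s, g u - g v) := sum_congr rfl fun v hv => by
        rw [hg _ (by rw [card_erase_of_mem hv, hs]), sum_erase_eq_sub hv]
    _ = 0 := by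
        rw [sum_sub_distrib, sum_const, hs, succ_nsmul, CharTwo.two_nsmul, zero_add,
          sub_self]

def starAt (v u : W) : ZMod 2 :=
  if u = v then 0 else β {v, u}

lemma sum_starAt_of_mem {v : W} {e : Finset W} (he : e.card = 2) (hv : v ∈ e) :
    ∑ u ∈ e, starAt β v u = β e := by
  obtain ⟨x, y, hxy, rfl⟩ := card_eq_two.mp he
  rw [sum_pair hxy]
  rcases mem_insert.mp hv with rfl | hy
  · simp [starAt, Ne.symm hxy]
  · rw [mem_singleton.mp hy]
    simp [starAt, hxy, pair_comm]

lemma d1_insert_eq_add_sum_starAt {v : W} {e : Finset W} (he : e.card = 2) (hv : v ∉ e) :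
    d1 β (insert v e) = β e + ∑ u ∈ e, starAt β v u := by
  obtain ⟨x, y, hxy, rfl⟩ := card_eq_two.mp he
  have hxv : x ≠ v := fun h => hv (by simp [h])
  have hyv : y ≠ v := fun h => hv (by simp [h])
  rw [d1_insert β hv, sum_pair hxy, sum_pair hxy, erase_insert (notMem_singleton.2 hxy),
    erase_insert_of_ne hxy, erase_singleton]
  simp [starAt, hxv, hyv, add_comm]

lemma notMem_and_d1_insert_ne_zero {v : W} {e : Finset W} (he : e.card = 2)
    (hne : β e ≠ ∑ u ∈ e, starAt β v u) : v ∉ e ∧ d1 β (insert v e) ≠ 0 := by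
  have hv : v ∉ e := fun hv => hne (sum_starAt_of_mem β he hv).symm
  refine ⟨hv, ?_⟩
  rwa [d1_insert_eq_add_sum_starAt β he hv, Ne, CharTwo.add_eq_iff_eq_add, zero_add]

end Cochains

section Counting

variable {W : Type*} [Fintype W] [DecidableEq W]

def d1Support (β : Finset W → ZMod 2) : Finset (Finset W) :=
  {s | s.card = 3 ∧ d1 β s ≠ 0}

def coboundaryMismatch (β : Finset W → ZMod 2) (g : W → ZMod 2) : Finset (Finset W) :=
  {e | e.card = 2 ∧ β e ≠ ∑ u ∈ e, g u}

lemma card_coboundaryMismatch_starAt_le (β : Finset W → ZMod 2) (v : W) :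
    #(coboundaryMismatch β (starAt β v)) ≤ #{s ∈ d1Support β | v ∈ s} := by
  have key : ∀ e ∈ (coboundaryMismatch β (starAt β v) : Set (Finset W)),
      v ∉ e ∧ d1 β (insert v e) ≠ 0 ∧ (insert v e).card = 3 := fun e he => by
    obtain ⟨-, hcard, hne⟩ := mem_filter.mp (mem_coe.mp he)
    obtain ⟨hv, hd⟩ := notMem_and_d1_insert_ne_zero β hcard hne
    exact ⟨hv, hd, by rw [card_insert_of_notMem hv, hcard]⟩
  refine card_le_card_of_injOn (insert v) (fun e he => ?_) (fun e₁ he₁ e₂ he₂ h => ?_)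
  · obtain ⟨-, hd, hcard⟩ := key e he
    simp [d1Support, hd, hcard]
  · rw [← erase_insert (key e₁ he₁).1, h, erase_insert (key e₂ he₂).1]

lemma exists_card_mul_card_filter_mem_le [Nonempty W] {k : ℕ} (B : Finset (Finset W))
    (hB : ∀ s ∈ B, s.card = k) : ∃ v, Fintype.card W * #{s ∈ B | v ∈ s} ≤ k * #B := by
  have hcount : ∑ v, #{s ∈ B | v ∈ s} = k * #B := by
    simp only [card_filter]
    rw [sum_comm]
    simp [sum_congr rfl hB, mul_comm]
  obtain ⟨v, -, hv⟩ := exists_le_of_sum_le univ_nonempty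
    (f := fun v => Fintype.card W * #{s ∈ B | v ∈ s}) (g := fun _ => k * #B)
    (by rw [← mul_sum, hcount, sum_const, card_univ, smul_eq_mul])
  exact ⟨v, hv⟩

end Counting

lemma mul_choose_three_le_of_mul_le {n d t : ℕ} (h : n * d ≤ 3 * t) :
    d * n.choose 3 ≤ t * n.choose 2 := by
  have hpascal : n.choose 3 * 3 = n.choose 2 * (n - 2) := Nat.choose_succ_right_eq n 2
  refine Nat.le_of_mul_le_mul_left ?_ (by norm_num : 0 < 3)
  calc 3 * (d * n.choose 3) = d * (n.choose 3 * 3) := by ring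
    _ = (n - 2) * d * n.choose 2 := by rw [hpascal]; ring
    _ ≤ n * d * n.choose 2 := by gcongr; omega
    _ ≤ 3 * t * n.choose 2 := by gcongr
    _ = 3 * (t * n.choose 2) := by ring

/-- **Seidel equivalence testability.** Identify graphs on `[n]` (`n ≥ 3`)
with their edge cochains `α, α' : C¹(K_n, F₂)`.  The fraction (among the `C(n,3)`
triangles) of triangles `{i,j,k}` on which `δ₁ α` and `δ₁ α'` disagree is at least the
normalized distance (over the `C(n,2)` edges) of `α - α'` from
`B¹(K_n, F₂) = {e ↦ g(u)+g(w)}`; in particular, if `Γ` and `Γ'` are Seidel equivalent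
(i.e. `α - α' ∈ B¹`) then `δ₁ α = δ₁ α'`, and conversely. -/
theorem seidel_equivalence_testability (hn : 3 ≤ Fintype.card V)
    (α α' : Finset V → ZMod 2) :
    ((((Finset.univ : Finset (Finset V)).filter
          (fun s => s.card = 3 ∧ d1 α s ≠ d1 α' s)).card : ℝ)
        / ((Fintype.card V).choose 3 : ℝ)
      ≥ ((sInf {k : ℕ | ∃ g : V → ZMod 2,
            k = ((Finset.univ : Finset (Finset V)).filter
              (fun e => e.card = 2 ∧ α e - α' e ≠ ∑ u ∈ e, g u)).card} : ℕ) : ℝ)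
          / ((Fintype.card V).choose 2 : ℝ)) ∧
    ((∃ g : V → ZMod 2, ∀ e : Finset V, e.card = 2 → α e - α' e = ∑ u ∈ e, g u) ↔
      ∀ s : Finset V, s.card = 3 → d1 α s = d1 α' s) := by
  have : Nonempty V := Fintype.card_pos_iff.mp (by omega)
  refine ⟨?_, fun ⟨g, hg⟩ s hs => ?_, fun h => ?_⟩
  · have hsupp :
        ({s | s.card = 3 ∧ d1 α s ≠ d1 α' s} : Finset (Finset V)) = d1Support (α - α') :=
      filter_congr fun s _ => by rw [d1_sub, sub_ne_zero]
    obtain ⟨v, hv⟩ := exists_card_mul_card_filter_mem_le (d1Support (α - α'))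
      fun s hs => (mem_filter.mp hs).2.1
    have hc2 : (0 : ℝ) < (Fintype.card V).choose 2 := by exact_mod_cast Nat.choose_pos (by omega)
    have hc3 : (0 : ℝ) < (Fintype.card V).choose 3 := by exact_mod_cast Nat.choose_pos hn
    rw [hsupp, ge_iff_le, div_le_div_iff₀ hc2 hc3]
    have hdist : sInf {k | ∃ g : V → ZMod 2, k = #(coboundaryMismatch (α - α') g)} ≤
        #{s ∈ d1Support (α - α') | v ∈ s} :=
      le_trans (Nat.sInf_le ⟨starAt (α - α') v, rfl⟩) (card_coboundaryMismatch_starAt_le _ v)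
    exact_mod_cast mul_choose_three_le_of_mul_le ((Nat.mul_le_mul_left _ hdist).trans hv)
  · rw [← sub_eq_zero, ← d1_sub]
    exact d1_eq_zero_of_forall_eq_sum _ hg hs
  · obtain ⟨v⟩ := ‹Nonempty V›
    refine ⟨starAt (α - α') v, fun e he => by_contra fun hne => ?_⟩
    obtain ⟨hv, hd⟩ := notMem_and_d1_insert_ne_zero (α - α') he hne
    exact hd (by rw [d1_sub, h _ (by rw [card_insert_of_notMem hv, he]), sub_self])
end
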